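/- Let H be a complex Hilbert space with dim H ≥ 3 and let k be a positive integer with k < dim H if H is finite-dimensional. The ortho-Grassmann graph Γ⊥_k(H) is connected: any two k-dimensional subspaces of H are joined by a finite path of consecutively ortho-adjacent k-dimensional subspaces. -/

import Mathlib

noncomputable section

open scoped Classical

variable {H : Type*} [NormedAddCommGroup H] [InnerProductSpace ℂ H] [CompleteSpace H]

/-- The orthogonal projection onto `X`, as an operator `H → H` (junk value `0` if the
orthogonal projection onto `X` does not exist; it always exists for finite-dimensional,
and more generally complete, subspaces). -/
noncomputable def projOn (X : Submodule ℂ H) : H →L[ℂ] H :=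
  if h : Submodule.HasOrthogonalProjection X then
    haveI := h
    X.subtypeL.comp X.orthogonalProjectionOnto
  else 0

/-- Two subspaces of `H` are compatible if their orthogonal projections commute. -/
def Compatible (X Y : Submodule ℂ H) : Prop :=
  projOn X * projOn Y = projOn Y * projOn X

/-- `X` is a `k`-dimensional subspace of `H`. -/
def IsDim (k : ℕ) (X : Submodule ℂ H) : Prop :=
  FiniteDimensional ℂ X ∧ Module.finrank ℂ X = k

/-- Two (distinct) `k`-dimensional subspaces are adjacent if their intersection is
`(k-1)`-dimensional. -/
def AdjacentSub (k : ℕ) (X Y : Submodule ℂ H) : Prop :=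
  X ≠ Y ∧ Module.finrank ℂ ↥(X ⊓ Y) = k - 1

/-- Ortho-adjacency: adjacent and compatible. -/
def OrthoAdjacent (k : ℕ) (X Y : Submodule ℂ H) : Prop :=
  AdjacentSub k X Y ∧ Compatible X Y

/-- The ortho-Grassmann graph `Γ⊥_k(H)` on the `k`-dimensional subspaces of `H`:
two `k`-dimensional subspaces are connected by an edge if they are ortho-adjacent. -/
def orthoGrassmannGraph (H : Type*) [NormedAddCommGroup H] [InnerProductSpace ℂ H]
    [CompleteSpace H] (k : ℕ) : SimpleGraph {X : Submodule ℂ H // IsDim k X} where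
  Adj X Y := OrthoAdjacent k X.1 Y.1
  symm := ⟨by
    rintro X Y ⟨⟨hne, hdim⟩, hc⟩
    refine ⟨⟨hne.symm, by rwa [inf_comm]⟩, ?_⟩
    unfold Compatible at hc ⊢
    exact hc.symm⟩
  loopless := ⟨fun X h => h.1.1 rfl⟩

/-- The Grassmann graph `Γ_k(H)` on the `k`-dimensional subspaces of `H`:
two `k`-dimensional subspaces are connected by an edge if they are adjacent. -/
def grassmannGraph (H : Type*) [NormedAddCommGroup H] [InnerProductSpace ℂ H]
    [CompleteSpace H] (k : ℕ) : SimpleGraph {X : Submodule ℂ H // IsDim k X} where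
  Adj X Y := AdjacentSub k X.1 Y.1
  symm := ⟨by
    rintro X Y ⟨hne, hdim⟩
    exact ⟨hne.symm, by rwa [inf_comm]⟩⟩
  loopless := ⟨fun X h => h.1 rfl⟩

/-!
If `A`, `B`, `C` are pairwise orthogonal, the projections onto `A ⊔ B` and `A ⊔ C` multiply, in
either order, to the projection onto `A`; so `W ⊔ ℂ∙a` and `W ⊔ ℂ∙b` are ortho-adjacent whenever
`a ≠ 0` is orthogonal to `W ⊔ ℂ∙b`. Two `k`-spaces `A ⊔ ℂ∙a`, `A ⊔ ℂ∙b` with `a, b ⊥ A` are then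
joined in two steps: if `A = 0`, through a line `ℂ∙z` with `z ⊥ a, b`, which exists since
`dim H ≥ 3`; otherwise, writing `A = A' ⊔ ℂ∙e` with `e ⊥ A'`, through `A' ⊔ ℂ∙a ⊔ ℂ∙b`, which is
obtained from `A' ⊔ ℂ∙a ⊔ ℂ∙e` and from `A' ⊔ ℂ∙b ⊔ ℂ∙e` by exchanging `e`. Finally, for `X ≠ Y`,
choose a hyperplane `A` of `X` containing `X ⊓ Y` and `y ∈ Y \ X`; then `A ⊔ ℂ∙y` is reachable from
`X` and meets `Y` in a larger subspace, so induction on `k - dim (X ⊓ Y)` concludes.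
-/

open Module Submodule

theorem finrank_sup_span_singleton_of_notMem {K V : Type*} [DivisionRing K] [AddCommGroup V]
    [Module K V] {W : Submodule K V} [FiniteDimensional K W] {v : V} (hv : v ∉ W) :
    finrank K ↥(W ⊔ K ∙ v) = finrank K W + 1 := by
  have h := finrank_sup_add_finrank_inf_eq W (K ∙ v)
  rw [(disjoint_span_singleton_of_notMem hv).eq_bot, finrank_bot,
    finrank_span_singleton (by rintro rfl; exact hv W.zero_mem)] at h
  omega

section Orthogonal

variable {𝕜 E : Type*} [RCLike 𝕜] [NormedAddCommGroup E] [InnerProductSpace 𝕜 E]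

theorem isOrtho_span_singleton_right {K : Submodule 𝕜 E} {v : E} : K ⟂ 𝕜 ∙ v ↔ v ∈ Kᗮ := by
  rw [isOrtho_comm, isOrtho_iff_le, span_singleton_le_iff_mem]

theorem notMem_of_mem_orthogonal {K : Submodule 𝕜 E} {v : E} (hv : v ∈ Kᗮ) (hv0 : v ≠ 0) :
    v ∉ K := fun h => hv0 ((mem_bot 𝕜).1 (K.inf_orthogonal_eq_bot ▸ mem_inf.2 ⟨h, hv⟩))

theorem orthogonal_inf_ne_bot_of_lt {K L : Submodule 𝕜 E} [K.HasOrthogonalProjection]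
    (h : K < L) : Kᗮ ⊓ L ≠ ⊥ := by
  intro hbot
  have hKL := sup_orthogonal_inf_of_hasOrthogonalProjection h.le
  rw [hbot, sup_bot_eq] at hKL
  exact h.ne hKL

theorem exists_mem_orthogonal_ne_zero_of_finrank_lt {K : Submodule 𝕜 E} [FiniteDimensional 𝕜 K]
    (h : (finrank 𝕜 K : Cardinal) < Module.rank 𝕜 E) : ∃ z ∈ Kᗮ, z ≠ 0 := by
  refine exists_mem_ne_zero_of_ne_bot fun hK => h.ne ?_
  rw [finrank_eq_rank, orthogonal_eq_bot_iff.1 hK, rank_top]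

theorem exists_mem_orthogonal_sup_span_ne_zero (hE : 3 ≤ Module.rank 𝕜 E) (a b : E) :
    ∃ z ∈ (𝕜 ∙ a ⊔ 𝕜 ∙ b)ᗮ, z ≠ 0 := by
  have h2 : finrank 𝕜 ↥(𝕜 ∙ a ⊔ 𝕜 ∙ b) ≤ 2 := by
    rw [← span_insert]
    exact (finrank_span_le_card _).trans (by simpa using Finset.card_le_two)
  refine exists_mem_orthogonal_ne_zero_of_finrank_lt ?_
  calc (finrank 𝕜 ↥(𝕜 ∙ a ⊔ 𝕜 ∙ b) : Cardinal) ≤ 2 := by exact_mod_cast h2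
    _ < 3 := by norm_num
    _ ≤ Module.rank 𝕜 E := hE

theorem sup_span_sub_starProjection (K : Submodule 𝕜 E) [K.HasOrthogonalProjection] (v : E) :
    K ⊔ 𝕜 ∙ (v - K.starProjection v) = K ⊔ 𝕜 ∙ v := by
  have hP : K.starProjection v ∈ K := K.starProjection_apply_mem v
  apply le_antisymm <;> refine sup_le le_sup_left ((span_singleton_le_iff_mem _ _).2 ?_)
  · exact sub_mem (mem_sup_right (mem_span_singleton_self v)) (mem_sup_left hP)
  · simpa using add_mem (mem_sup_right (mem_span_singleton_self (v - K.starProjection v)))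
      (mem_sup_left hP)

theorem starProjection_sup_of_isOrtho {A B : Submodule 𝕜 E} [A.HasOrthogonalProjection]
    [B.HasOrthogonalProjection] [(A ⊔ B).HasOrthogonalProjection] (h : A ⟂ B) :
    (A ⊔ B).starProjection = A.starProjection + B.starProjection := by
  ext v
  refine eq_starProjection_of_mem_orthogonal
    (add_mem (mem_sup_left (A.starProjection_apply_mem v))
      (mem_sup_right (B.starProjection_apply_mem v))) ?_
  rw [add_apply, ← inf_orthogonal]
  constructor
  · rw [sub_add_eq_sub_sub]
    exact sub_mem (A.sub_starProjection_mem_orthogonal v) (h.symm (B.starProjection_apply_mem v))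
  · rw [sub_add_eq_sub_sub_swap]
    exact sub_mem (B.sub_starProjection_mem_orthogonal v) (h (A.starProjection_apply_mem v))

theorem starProjection_sup_mul_starProjection_sup {A B C : Submodule 𝕜 E}
    [FiniteDimensional 𝕜 A] [FiniteDimensional 𝕜 B] [FiniteDimensional 𝕜 C]
    (hAB : A ⟂ B) (hAC : A ⟂ C) (hBC : B ⟂ C) :
    (A ⊔ B).starProjection * (A ⊔ C).starProjection = A.starProjection := by
  have hAC' : A.starProjection * C.starProjection = 0 := hAC.starProjection_comp_starProjection
  have hBA : B.starProjection * A.starProjection = 0 :=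
    hAB.symm.starProjection_comp_starProjection
  have hBC' : B.starProjection * C.starProjection = 0 := hBC.starProjection_comp_starProjection
  rw [starProjection_sup_of_isOrtho hAB, starProjection_sup_of_isOrtho hAC, add_mul, mul_add,
    mul_add, A.isIdempotentElem_starProjection.eq, hAC', hBA, hBC']
  simp only [add_zero]

end Orthogonal

section Complex

variable {E : Type*} [NormedAddCommGroup E] [InnerProductSpace ℂ E]

theorem projOn_eq_starProjection (X : Submodule ℂ E) [X.HasOrthogonalProjection] :
    projOn X = X.starProjection :=
  dif_pos ‹_›

theorem compatible_sup_sup {A B C : Submodule ℂ E} [FiniteDimensional ℂ A]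
    [FiniteDimensional ℂ B] [FiniteDimensional ℂ C] (hAB : A ⟂ B) (hAC : A ⟂ C) (hBC : B ⟂ C) :
    Compatible (A ⊔ B) (A ⊔ C) := by
  rw [Compatible, projOn_eq_starProjection, projOn_eq_starProjection,
    starProjection_sup_mul_starProjection_sup hAB hAC hBC,
    starProjection_sup_mul_starProjection_sup hAC hAB hBC.symm]

theorem orthoAdjacent_sup_sup {A B C : Submodule ℂ E} [FiniteDimensional ℂ A]
    [FiniteDimensional ℂ B] [FiniteDimensional ℂ C] (hAB : A ⟂ B) (hAC : A ⟂ C) (hBC : B ⟂ C)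
    (hB : B ≠ ⊥) : OrthoAdjacent (finrank ℂ A + 1) (A ⊔ B) (A ⊔ C) := by
  have hinf : (A ⊔ B) ⊓ (A ⊔ C) = A := by
    rw [sup_inf_assoc_of_le B le_sup_left, (isOrtho_sup_right.2 ⟨hAB.symm, hBC⟩).disjoint.eq_bot,
      sup_bot_eq]
  refine ⟨⟨fun h => hB ?_, by rw [hinf, Nat.add_sub_cancel]⟩, compatible_sup_sup hAB hAC hBC⟩
  rw [← h, inf_idem] at hinf
  exact isOrtho_self.1 (hAB.mono_left (le_sup_right.trans hinf.le))

theorem orthoAdjacent_sup_span_singleton (W : Submodule ℂ E) [FiniteDimensional ℂ W] {a b : E}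
    (ha : a ∈ (W ⊔ ℂ ∙ b)ᗮ) (ha0 : a ≠ 0) :
    OrthoAdjacent (finrank ℂ W + 1) (W ⊔ ℂ ∙ a) (W ⊔ ℂ ∙ b) := by
  rw [← sup_span_sub_starProjection W b] at ha ⊢
  exact orthoAdjacent_sup_sup (isOrtho_span_singleton_right.2 (orthogonal_le le_sup_left ha))
    (isOrtho_span_singleton_right.2 (W.sub_starProjection_mem_orthogonal b))
    (isOrtho_span_singleton_right.2 (orthogonal_le le_sup_right ha)).symm
    (mt span_singleton_eq_bot.1 ha0)

theorem IsDim.eq_of_le {k : ℕ} {X Y : Submodule ℂ E} (hX : IsDim k X) (hY : IsDim k Y)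
    (h : X ≤ Y) : X = Y :=
  have := hY.1
  eq_of_le_of_finrank_eq h (hX.2.trans hY.2.symm)

theorem IsDim.sup_span_singleton {k : ℕ} {W : Submodule ℂ E} [FiniteDimensional ℂ W] {a b : E}
    (ha : a ∉ W) (hb : b ∉ W) (h : IsDim k (W ⊔ ℂ ∙ a)) : IsDim k (W ⊔ ℂ ∙ b) :=
  ⟨inferInstance, by
    rw [finrank_sup_span_singleton_of_notMem hb, ← finrank_sup_span_singleton_of_notMem ha, h.2]⟩

end Complex

theorem orthoGrassmannGraph_adj_of_eq_sup {k : ℕ} {W : Submodule ℂ H} [FiniteDimensional ℂ W]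
    {a b : H} (ha : a ∈ (W ⊔ ℂ ∙ b)ᗮ) (ha0 : a ≠ 0) {X Y : {X : Submodule ℂ H // IsDim k X}}
    (hX : X.1 = W ⊔ ℂ ∙ a) (hY : Y.1 = W ⊔ ℂ ∙ b) : (orthoGrassmannGraph H k).Adj X Y := by
  have hk : finrank ℂ W + 1 = k := by
    rw [← finrank_sup_span_singleton_of_notMem
      (notMem_of_mem_orthogonal (orthogonal_le le_sup_left ha) ha0), ← hX]
    exact X.2.2
  show OrthoAdjacent k X.1 Y.1
  rw [hX, hY, ← hk]
  exact orthoAdjacent_sup_span_singleton W ha ha0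

theorem orthoGrassmannGraph_reachable_of_eq_span_singleton (hH : 3 ≤ Module.rank ℂ H) {k : ℕ}
    {a b : H} (ha0 : a ≠ 0) {X Y : {X : Submodule ℂ H // IsDim k X}} (hX : X.1 = ⊥ ⊔ ℂ ∙ a)
    (hY : Y.1 = ⊥ ⊔ ℂ ∙ b) : (orthoGrassmannGraph H k).Reachable X Y := by
  obtain ⟨z, hz, hz0⟩ := exists_mem_orthogonal_sup_span_ne_zero hH a b
  let Z : {X : Submodule ℂ H // IsDim k X} :=
    ⟨⊥ ⊔ ℂ ∙ z, (hX ▸ X.2).sup_span_singleton (by simpa using ha0) (by simpa using hz0)⟩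
  have hZX : (orthoGrassmannGraph H k).Adj Z X :=
    orthoGrassmannGraph_adj_of_eq_sup (orthogonal_le (sup_le bot_le le_sup_left) hz) hz0 rfl hX
  have hZY : (orthoGrassmannGraph H k).Adj Z Y :=
    orthoGrassmannGraph_adj_of_eq_sup (orthogonal_le (sup_le bot_le le_sup_right) hz) hz0 rfl hY
  exact hZX.symm.reachable.trans hZY.reachable

theorem orthoGrassmannGraph_reachable_of_eq_sup_of_ne_bot {k : ℕ} {A : Submodule ℂ H}
    [FiniteDimensional ℂ A] (hA : A ≠ ⊥) {a b : H} (ha : a ∈ Aᗮ) (hb : b ∈ Aᗮ)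
    {X Y : {X : Submodule ℂ H // IsDim k X}} (hX : X.1 = A ⊔ ℂ ∙ a) (hY : Y.1 = A ⊔ ℂ ∙ b)
    (hbX : b ∉ X.1) : (orthoGrassmannGraph H k).Reachable X Y := by
  obtain ⟨e, heA, he0⟩ := exists_mem_ne_zero_of_ne_bot hA
  set A' := (ℂ ∙ e)ᗮ ⊓ A
  have : FiniteDimensional ℂ A' := finiteDimensional_of_le inf_le_right
  have hA' : ℂ ∙ e ⊔ A' = A :=
    sup_orthogonal_inf_of_hasOrthogonalProjection ((span_singleton_le_iff_mem _ _).2 heA)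
  have he_perp (v : H) (hv : v ∈ Aᗮ) : ℂ ∙ v ≤ (ℂ ∙ e)ᗮ :=
    (span_singleton_le_iff_mem _ _).2
      (mem_orthogonal_singleton_iff_inner_right.2 (inner_right_of_mem_orthogonal heA hv))
  have he : e ∈ (A' ⊔ ℂ ∙ a ⊔ ℂ ∙ b)ᗮ := isOrtho_span_singleton_right.1 <| isOrtho_iff_le.2 <|
    sup_le (sup_le inf_le_left (he_perp a ha)) (he_perp b hb)
  have hXe : X.1 = A' ⊔ ℂ ∙ a ⊔ ℂ ∙ e := by rw [hX, ← hA']; ac_rfl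
  have hYe : Y.1 = A' ⊔ ℂ ∙ b ⊔ ℂ ∙ e := by rw [hY, ← hA']; ac_rfl
  let M : {X : Submodule ℂ H // IsDim k X} :=
    ⟨A' ⊔ ℂ ∙ a ⊔ ℂ ∙ b, (hXe ▸ X.2).sup_span_singleton
      (notMem_of_mem_orthogonal (orthogonal_le le_sup_left he) he0)
      fun h => hbX (hXe ▸ mem_sup_left h)⟩
  have hXM : (orthoGrassmannGraph H k).Adj X M :=
    orthoGrassmannGraph_adj_of_eq_sup he he0 hXe rfl
  have hYM : (orthoGrassmannGraph H k).Adj Y M :=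
    orthoGrassmannGraph_adj_of_eq_sup (sup_right_comm A' (ℂ ∙ a) (ℂ ∙ b) ▸ he) he0 hYe
      (sup_right_comm _ _ _)
  exact hXM.reachable.trans hYM.symm.reachable

theorem orthoGrassmannGraph_reachable_of_eq_sup (hH : 3 ≤ Module.rank ℂ H) {k : ℕ}
    {A : Submodule ℂ H} [FiniteDimensional ℂ A] {a b : H} (ha : a ∈ Aᗮ) (hb : b ∈ Aᗮ)
    {X Y : {X : Submodule ℂ H // IsDim k X}} (hX : X.1 = A ⊔ ℂ ∙ a) (hY : Y.1 = A ⊔ ℂ ∙ b) :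
    (orthoGrassmannGraph H k).Reachable X Y := by
  by_cases hXY : X = Y
  · exact hXY ▸ .refl X
  have haY : a ∉ Y.1 := fun h => hXY <| Subtype.ext <| X.2.eq_of_le Y.2 <|
    hX ▸ sup_le (hY ▸ le_sup_left) ((span_singleton_le_iff_mem _ _).2 h)
  have hbX : b ∉ X.1 := fun h => hXY <| Subtype.ext <| (Y.2.eq_of_le X.2 <|
    hY ▸ sup_le (hX ▸ le_sup_left) ((span_singleton_le_iff_mem _ _).2 h)).symm
  rcases eq_or_ne A ⊥ with rfl | hA
  · exact orthoGrassmannGraph_reachable_of_eq_span_singleton hH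
      (ne_of_mem_of_not_mem Y.1.zero_mem haY).symm hX hY
  · exact orthoGrassmannGraph_reachable_of_eq_sup_of_ne_bot hA ha hb hX hY hbX

theorem exists_reachable_finrank_inf_lt (hH : 3 ≤ Module.rank ℂ H) {k : ℕ}
    {X Y : {X : Submodule ℂ H // IsDim k X}} (hXY : X ≠ Y) :
    ∃ X', (orthoGrassmannGraph H k).Reachable X X' ∧
      finrank ℂ ↥(X.1 ⊓ Y.1) < finrank ℂ ↥(X'.1 ⊓ Y.1) := by
  have := X.2.1
  have hXY' : ¬X.1 ≤ Y.1 := fun h => hXY (Subtype.ext (X.2.eq_of_le Y.2 h))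
  have hYX : ¬Y.1 ≤ X.1 := fun h => hXY (Subtype.ext (Y.2.eq_of_le X.2 h)).symm
  obtain ⟨y, hyY, hyX⟩ := SetLike.not_le_iff_exists.1 hYX
  obtain ⟨x, ⟨hxZ, hxX⟩, hx0⟩ :=
    exists_mem_ne_zero_of_ne_bot (orthogonal_inf_ne_bot_of_lt (inf_lt_left.2 hXY'))
  set A := (ℂ ∙ x)ᗮ ⊓ X.1
  have : FiniteDimensional ℂ A := finiteDimensional_of_le inf_le_right
  have hXA : X.1 = A ⊔ ℂ ∙ x := by
    rw [sup_comm]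
    exact (sup_orthogonal_inf_of_hasOrthogonalProjection
      ((span_singleton_le_iff_mem _ _).2 hxX)).symm
  have hxA : x ∈ Aᗮ :=
    orthogonal_le inf_le_left (le_orthogonal_orthogonal _ (mem_span_singleton_self x))
  have hZA : X.1 ⊓ Y.1 ≤ A := le_inf (isOrtho_iff_le.1 (isOrtho_span_singleton_right.2 hxZ))
    inf_le_left
  let X' : {X : Submodule ℂ H // IsDim k X} :=
    ⟨A ⊔ ℂ ∙ y, (hXA ▸ X.2).sup_span_singleton (notMem_of_mem_orthogonal hxA hx0)
      fun h => hyX ((inf_le_right : A ≤ X.1) h)⟩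
  refine ⟨X', orthoGrassmannGraph_reachable_of_eq_sup hH hxA
    (A.sub_starProjection_mem_orthogonal y) hXA (sup_span_sub_starProjection A y).symm, ?_⟩
  have : FiniteDimensional ℂ ↥(X'.1 ⊓ Y.1) := finiteDimensional_of_le inf_le_left
  have hlt : X.1 ⊓ Y.1 < X.1 ⊓ Y.1 ⊔ ℂ ∙ y := left_lt_sup.2 fun h =>
    hyX ((inf_le_left : X.1 ⊓ Y.1 ≤ X.1) ((span_singleton_le_iff_mem _ _).1 h))
  exact finrank_lt_finrank_of_lt <| hlt.trans_le <| sup_le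
    (le_inf (hZA.trans le_sup_left) inf_le_right)
    (le_inf le_sup_right ((span_singleton_le_iff_mem _ _).2 hyY))

theorem orthoGrassmannGraph_preconnected_general
    (k : ℕ) (hH : 3 ≤ Module.rank ℂ H) :
    (orthoGrassmannGraph H k).Preconnected := by
  intro X Y
  induction hn : k - finrank ℂ ↥(X.1 ⊓ Y.1) using Nat.strong_induction_on generalizing X with
  | _ n ih =>
    by_cases hXY : X = Y
    · exact hXY ▸ .refl X
    obtain ⟨X', hXX', hlt⟩ := exists_reachable_finrank_inf_lt hH hXY
    have hle : finrank ℂ ↥(X'.1 ⊓ Y.1) ≤ k := by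
      have := Y.2.1
      exact (finrank_mono inf_le_right).trans_eq Y.2.2
    exact hXX'.trans (ih _ (by omega) X' rfl)

/-- The ortho-Grassmann graph `Γ⊥_k(H)` is connected: any two `k`-dimensional subspaces of `H`
are joined by a finite path of consecutively ortho-adjacent `k`-dimensional subspaces. -/
theorem orthoGrassmannGraph_preconnected
    (k : ℕ) (hk : 0 < k) (hH : 3 ≤ Module.rank ℂ H)
    (hkH : (k : Cardinal) < Module.rank ℂ H) :
    (orthoGrassmannGraph H k).Preconnected :=
  orthoGrassmannGraph_preconnected_general k hH

end
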